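/- arXiv:2501.12360 — 3 statements merged into one kernel-verified Lean document; each statement's English description precedes it below -/
import Mathlib

section
/- If a sequence of Gaussian random variables converges in probability to a random variable X, then X is also Gaussian (possibly degenerate with zero variance), and the convergence holds in L^p for every 1 ≤ p < ∞. -/
/-!
Convergence in probability implies weak convergence of the laws `N(mₙ, vₙ)`. Since the limit law
gives mass `> 1/2` to some interval `[-A, A]`, so do the `N(mₙ, vₙ)` eventually (portmanteau);
a Gaussian is symmetric about its mean, and its density is at most `(2πv)^{-1/2}`, hence
`|mₙ| ≤ A` and `vₙ ≤ 4A²`. Along a subsequence the parameters converge, and then so do the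
characteristic functions `exp(itmₙ - vₙt²/2)`, so by Lévy's theorem the limit law is Gaussian.
The same parameter bounds bound the `L^(p+1)` norms of the `Xₙ`, which gives uniform
integrability in `L^p`, and Vitali's theorem upgrades convergence in probability to `L^p`.
-/

open MeasureTheory ProbabilityTheory Filter

/-- A real random variable is Gaussian (possibly degenerate, i.e. variance zero)
if its law is `gaussianReal m v` for some mean `m` and variance `v ≥ 0`. -/
def IsGaussianRV {Ω : Type*} [MeasurableSpace Ω] (μ : Measure Ω) (X : Ω → ℝ) : Prop :=
  ∃ (m : ℝ) (v : NNReal), Measure.map X μ = gaussianReal m v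

open Set
open scoped ENNReal NNReal Topology

namespace MeasureTheory

lemma unifIntegrable_of_eLpNorm_le {ι α β : Type*} [MeasurableSpace α] {μ : Measure α}
    [NormedAddCommGroup β] {f : ι → α → β} {p q : ℝ≥0∞} (hpq : p < q)
    (hf : ∀ i, AEStronglyMeasurable (f i) μ) {C : ℝ≥0∞} (hC : C ≠ ∞)
    (hbound : ∀ i, eLpNorm (f i) q μ ≤ C) : UnifIntegrable f p μ := by
  intro ε hε
  rcases eq_or_ne p 0 with rfl | hp0
  · exact ⟨1, one_pos, fun i s _ _ => by simp⟩
  set θ := 1 / p.toReal - 1 / q.toReal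
  have hθ : 0 < θ := by
    have hpr : 0 < p.toReal := ENNReal.toReal_pos hp0 hpq.ne_top
    rcases eq_or_ne q ∞ with rfl | hq
    · simpa [θ] using hpr
    · exact sub_pos.2 (one_div_lt_one_div_of_lt hpr (ENNReal.toReal_strict_mono hq hpq))
  -- Hölder: on a set of measure `≤ δ` the `L^p` norm is at most `C * δ ^ θ`.
  have hlim : Tendsto (fun δ : ℝ => C * ENNReal.ofReal δ ^ θ) (𝓝 0) (𝓝 0) := by
    have h := ENNReal.Tendsto.const_mul (a := C)
      (((ENNReal.continuous_rpow_const (y := θ)).comp ENNReal.continuous_ofReal).tendsto 0)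
      (Or.inr hC)
    simpa [ENNReal.zero_rpow_of_pos hθ] using h
  obtain ⟨δ, hδε, hδ⟩ := (((hlim.mono_left nhdsWithin_le_nhds).eventually
    (gt_mem_nhds (ENNReal.ofReal_pos.2 hε))).and (self_mem_nhdsWithin (s := Ioi 0))).exists
  refine ⟨δ, hδ, fun i s hs hμs => ?_⟩
  calc eLpNorm (s.indicator (f i)) p μ = eLpNorm (f i) p (μ.restrict s) :=
        eLpNorm_indicator_eq_eLpNorm_restrict hs
    _ ≤ eLpNorm (f i) q (μ.restrict s) * μ.restrict s univ ^ θ :=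
        eLpNorm_le_eLpNorm_mul_rpow_measure_univ hpq.le (hf i).restrict
    _ ≤ C * ENNReal.ofReal δ ^ θ := by
        gcongr
        · exact (eLpNorm_mono_measure _ Measure.restrict_le_self).trans (hbound i)
        · rwa [Measure.restrict_apply_univ]
    _ ≤ ENNReal.ofReal ε := hδε.le

end MeasureTheory

namespace ProbabilityTheory

lemma gaussianReal_eq_map_stdGaussian (m : ℝ) (v : ℝ≥0) :
    gaussianReal m v = (gaussianReal 0 1).map (fun x => √v * x + m) := by
  have hscale : (gaussianReal 0 1).map (√v * ·) = gaussianReal 0 v := by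
    rw [gaussianReal_map_const_mul]
    congr 1
    · simp
    · ext; simp
  calc gaussianReal m v = ((gaussianReal 0 1).map (√v * ·)).map (· + m) := by
        rw [hscale, gaussianReal_map_add_const, zero_add]
    _ = _ := Measure.map_map (by fun_prop) (by fun_prop)

lemma gaussianReal_Iio_eq_Ioi (m : ℝ) (v : ℝ≥0) :
    gaussianReal m v (Iio m) = gaussianReal m v (Ioi m) := by
  have hrefl : (gaussianReal m v).map (2 * m - ·) = gaussianReal m v := by
    rw [gaussianReal_map_const_sub]; ring_nf
  conv_lhs => rw [← hrefl]
  rw [Measure.map_apply (by fun_prop) measurableSet_Iio]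
  congr 1
  ext x
  simp only [mem_preimage, mem_Iio, mem_Ioi]
  constructor <;> intro h <;> linarith

lemma gaussianReal_Ioi_le_half (m : ℝ) (v : ℝ≥0) : gaussianReal m v (Ioi m) ≤ 2⁻¹ := by
  have h : gaussianReal m v (Iio m) + gaussianReal m v (Ioi m) ≤ 1 := by
    rw [← measure_union ((Iio_disjoint_Ici le_rfl).mono_right Ioi_subset_Ici_self)
      measurableSet_Ioi]
    exact prob_le_one
  rw [gaussianReal_Iio_eq_Ioi, ← two_mul] at h
  rwa [ENNReal.le_inv_iff_mul_le, mul_comm]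

lemma gaussianReal_Iio_le_half (m : ℝ) (v : ℝ≥0) : gaussianReal m v (Iio m) ≤ 2⁻¹ :=
  gaussianReal_Iio_eq_Ioi m v ▸ gaussianReal_Ioi_le_half m v

lemma gaussianPDF_le (m : ℝ) (v : ℝ≥0) (x : ℝ) :
    gaussianPDF m v x ≤ ENNReal.ofReal (√(2 * Real.pi * v))⁻¹ := by
  refine ENNReal.ofReal_le_ofReal ?_
  rw [gaussianPDFReal]
  refine mul_le_of_le_one_right (by positivity) (Real.exp_le_one_iff.2 ?_)
  exact div_nonpos_of_nonpos_of_nonneg (neg_nonpos.2 (sq_nonneg _)) (by positivity)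

lemma gaussianReal_Icc_le (m : ℝ) {v : ℝ≥0} (hv : v ≠ 0) (a b : ℝ) :
    gaussianReal m v (Icc a b) ≤ ENNReal.ofReal ((b - a) / √(2 * Real.pi * v)) := by
  rw [gaussianReal_apply m hv]
  calc ∫⁻ x in Icc a b, gaussianPDF m v x
      ≤ ∫⁻ _ in Icc a b, ENNReal.ofReal (√(2 * Real.pi * v))⁻¹ :=
        lintegral_mono fun x => gaussianPDF_le m v x
    _ = ENNReal.ofReal ((b - a) / √(2 * Real.pi * v)) := by
        rw [setLIntegral_const, Real.volume_Icc, ← ENNReal.ofReal_mul (by positivity),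
          div_eq_mul_inv, mul_comm]

lemma mem_Icc_of_half_lt_gaussianReal_Icc {m : ℝ} {v : ℝ≥0} {a b : ℝ}
    (h : 2⁻¹ < gaussianReal m v (Icc a b)) : m ∈ Icc a b := by
  by_contra hm
  rcases not_and_or.1 hm with ha | hb
  · have hsub : Icc a b ⊆ Ioi m := fun x hx => (not_le.1 ha).trans_le hx.1
    exact (measure_mono hsub |>.trans (gaussianReal_Ioi_le_half m v)).not_gt h
  · have hsub : Icc a b ⊆ Iio m := fun x hx => hx.2.trans_lt (not_le.1 hb)
    exact (measure_mono hsub |>.trans (gaussianReal_Iio_le_half m v)).not_gt h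

lemma var_le_of_half_lt_gaussianReal_Icc {m : ℝ} {v : ℝ≥0} {a b : ℝ}
    (h : 2⁻¹ < gaussianReal m v (Icc a b)) : (v : ℝ) ≤ (b - a) ^ 2 := by
  rcases eq_or_ne v 0 with rfl | hv
  · simpa using sq_nonneg (b - a)
  have hsqrt : 0 < √(2 * Real.pi * v) := by positivity
  have hhalf : 2⁻¹ < (b - a) / √(2 * Real.pi * v) := by
    have := h.trans_le (gaussianReal_Icc_le m hv a b)
    rwa [← ENNReal.ofReal_ofNat 2, ← ENNReal.ofReal_inv_of_pos two_pos,
      ENNReal.ofReal_lt_ofReal_iff_of_nonneg (by norm_num)] at this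
  rw [lt_div_iff₀ hsqrt] at hhalf
  have hsq : 2 * Real.pi * v < 4 * (b - a) ^ 2 := by
    rw [← Real.sq_sqrt (by positivity : 0 ≤ 2 * Real.pi * v)]
    nlinarith
  nlinarith [Real.pi_gt_three, v.coe_nonneg]

section WeakLimit

variable {ν : ℕ → ProbabilityMeasure ℝ} {ν₀ : ProbabilityMeasure ℝ} {m : ℕ → ℝ} {v : ℕ → ℝ≥0}

lemma tendsto_of_eq_gaussianReal {p : ℕ → ℝ × ℝ≥0} {p₀ : ℝ × ℝ≥0} (hp : Tendsto p atTop (𝓝 p₀))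
    (hν : ∀ n, (ν n : Measure ℝ) = gaussianReal (p n).1 (p n).2)
    (hν₀ : (ν₀ : Measure ℝ) = gaussianReal p₀.1 p₀.2) :
    Tendsto ν atTop (𝓝 ν₀) := by
  refine ProbabilityMeasure.tendsto_of_tendsto_charFun fun t => ?_
  simp only [hν, hν₀, charFun_gaussianReal]
  have hcont : Continuous fun q : ℝ × ℝ≥0 =>
      Complex.exp (t * q.1 * Complex.I - q.2 * t ^ 2 / 2) := by fun_prop
  exact (hcont.tendsto p₀).comp hp

lemma exists_bound_of_tendsto_gaussianReal (hν : Tendsto ν atTop (𝓝 ν₀))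
    (hlaw : ∀ n, (ν n : Measure ℝ) = gaussianReal (m n) (v n)) :
    ∃ C : ℝ, ∀ᶠ n in atTop, |m n| ≤ C ∧ √(v n) ≤ C := by
  have hball : Tendsto (fun A : ℕ => (ν₀ : Measure ℝ) (Metric.ball 0 A)) atTop (𝓝 1) := by
    have h := tendsto_measure_iUnion_atTop (μ := (ν₀ : Measure ℝ))
      (fun i j hij => Metric.ball_subset_ball (Nat.cast_le.2 hij) : Monotone fun A : ℕ =>
        Metric.ball (0 : ℝ) A)
    rwa [Metric.iUnion_ball_nat, measure_univ] at h
  obtain ⟨A, hA⟩ := (hball.eventually (lt_mem_nhds ENNReal.one_half_lt_one)).exists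
  -- Portmanteau: the open ball keeps mass `> 1/2` along the sequence.
  have hev := eventually_lt_of_lt_liminf <| hA.trans_le <|
    ProbabilityMeasure.le_liminf_measure_open_of_tendsto hν Metric.isOpen_ball
  refine ⟨2 * A, hev.mono fun n hn => ?_⟩
  have hIcc : 2⁻¹ < gaussianReal (m n) (v n) (Icc (-A) A) := by
    rw [← hlaw n]
    refine hn.trans_le (measure_mono ?_)
    simpa [Real.closedBall_eq_Icc] using Metric.ball_subset_closedBall (x := (0 : ℝ))
  have hm := mem_Icc_of_half_lt_gaussianReal_Icc hIcc
  have hv := var_le_of_half_lt_gaussianReal_Icc hIcc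
  refine ⟨abs_le.2 ⟨by linarith [hm.1], by linarith [hm.2]⟩, ?_⟩
  calc √(v n) ≤ √((2 * A) ^ 2) := Real.sqrt_le_sqrt (by linarith)
    _ = 2 * A := Real.sqrt_sq (by positivity)

lemma exists_eq_gaussianReal_of_tendsto (hν : Tendsto ν atTop (𝓝 ν₀))
    (hlaw : ∀ n, (ν n : Measure ℝ) = gaussianReal (m n) (v n)) :
    ∃ (m₀ : ℝ) (v₀ : ℝ≥0), (ν₀ : Measure ℝ) = gaussianReal m₀ v₀ := by
  obtain ⟨C, hC⟩ := exists_bound_of_tendsto_gaussianReal hν hlaw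
  have hK : IsCompact (Icc (-C) C ×ˢ Icc (0 : ℝ≥0) (C ^ 2).toNNReal) :=
    isCompact_Icc.prod isCompact_Icc
  have hmem : ∀ᶠ n in atTop, (m n, v n) ∈ Icc (-C) C ×ˢ Icc (0 : ℝ≥0) (C ^ 2).toNNReal := by
    refine hC.mono fun n ⟨hm, hv⟩ => ⟨abs_le.1 hm, bot_le, ?_⟩
    rw [← NNReal.coe_le_coe, Real.coe_toNNReal _ (sq_nonneg C)]
    exact (Real.sqrt_le_left (by linarith [Real.sqrt_nonneg (v n)])).1 hv
  obtain ⟨p₀, -, φ, hφ, hlim⟩ := hK.tendsto_subseq' hmem.frequently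
  obtain ⟨ρ, hρ⟩ : ∃ ρ : ProbabilityMeasure ℝ, (ρ : Measure ℝ) = gaussianReal p₀.1 p₀.2 :=
    ⟨⟨gaussianReal p₀.1 p₀.2, inferInstance⟩, rfl⟩
  have hνφ : Tendsto (ν ∘ φ) atTop (𝓝 ρ) :=
    tendsto_of_eq_gaussianReal hlim (fun k => hlaw (φ k)) hρ
  exact ⟨p₀.1, p₀.2, by rw [tendsto_nhds_unique (hν.comp hφ.tendsto_atTop) hνφ, hρ]⟩

end WeakLimit

section Moments

variable {Ω : Type*} {mΩ : MeasurableSpace Ω} {μ : Measure Ω}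

lemma HasLaw.eLpNorm_eq {E : Type*} [NormedAddCommGroup E] [MeasurableSpace E]
    [OpensMeasurableSpace E] [SecondCountableTopology E] {X : Ω → E} {P : Measure E}
    (hX : HasLaw X P μ) (p : ℝ≥0∞) :
    eLpNorm X p μ = eLpNorm id p P := by
  rw [← hX.map_eq, eLpNorm_map_measure aestronglyMeasurable_id hX.aemeasurable]
  rfl

lemma HasLaw.memLp {E : Type*} [NormedAddCommGroup E] [MeasurableSpace E] {X : Ω → E}
    {P : Measure E} {p : ℝ≥0∞} (hX : HasLaw X P μ)
    (h : MemLp id p P) : MemLp X p μ :=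
  (hX.map_eq ▸ h).comp_of_map hX.aemeasurable

lemma eLpNorm_id_gaussianReal_le (m : ℝ) (v : ℝ≥0) {q : ℝ≥0∞} (hq : 1 ≤ q) :
    eLpNorm id q (gaussianReal m v) ≤ ‖√(v : ℝ)‖ₑ * eLpNorm id q (gaussianReal 0 1) + ‖m‖ₑ := by
  have haffine : id ∘ (fun x => √(v : ℝ) * x + m) = √(v : ℝ) • id + fun _ => m := by
    ext; simp
  rw [gaussianReal_eq_map_stdGaussian, eLpNorm_map_measure aestronglyMeasurable_id (by fun_prop),
    haffine]
  refine (eLpNorm_add_le (by fun_prop) (by fun_prop) hq).trans_eq ?_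
  rw [eLpNorm_const_smul, eLpNorm_const m (by positivity) (IsProbabilityMeasure.ne_zero _)]
  simp

lemma unifIntegrable_of_hasLaw_gaussianReal {ι : Type*} {X : ι → Ω → ℝ} {m : ι → ℝ}
    {v : ι → ℝ≥0} (hX : ∀ i, HasLaw (X i) (gaussianReal (m i) (v i)) μ) {C : ℝ}
    (hm : ∀ i, |m i| ≤ C) (hv : ∀ i, √(v i : ℝ) ≤ C) {p : ℝ≥0∞} (hp : p ≠ ∞) :
    UnifIntegrable X p μ := by
  have hK : eLpNorm id (p + 1) (gaussianReal 0 1) ≠ ∞ :=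
    (memLp_id_gaussianReal' _ (by simpa using hp)).eLpNorm_ne_top
  refine unifIntegrable_of_eLpNorm_le (ENNReal.lt_add_right hp one_ne_zero)
    (fun i => (hX i).aemeasurable.aestronglyMeasurable)
    (C := ENNReal.ofReal C * eLpNorm id (p + 1) (gaussianReal 0 1) + ENNReal.ofReal C)
    (by finiteness) fun i => ?_
  rw [(hX i).eLpNorm_eq]
  refine (eLpNorm_id_gaussianReal_le _ _ le_add_self).trans ?_
  gcongr
  · exact (Real.enorm_eq_ofReal (Real.sqrt_nonneg _)).trans_le (ENNReal.ofReal_le_ofReal (hv i))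
  · exact (Real.enorm_eq_ofReal_abs _).trans_le (ENNReal.ofReal_le_ofReal (hm i))

end Moments

end ProbabilityTheory

lemma IsGaussianRV.exists_hasLaw {Ω : Type*} [MeasurableSpace Ω] {μ : Measure Ω} {X : Ω → ℝ}
    (h : IsGaussianRV μ X) : ∃ (m : ℝ) (v : ℝ≥0), HasLaw X (gaussianReal m v) μ := by
  obtain ⟨m, v, hmap⟩ := h
  exact ⟨m, v, .of_map_ne_zero (hmap ▸ IsProbabilityMeasure.ne_zero _), hmap⟩

theorem gaussian_tendstoInMeasure_limit_gaussian_and_Lp_general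
    {Ω : Type*} [MeasurableSpace Ω] (μ : Measure Ω) [IsProbabilityMeasure μ]
    (X : ℕ → Ω → ℝ) (Y : Ω → ℝ)
    (hgauss : ∀ n, IsGaussianRV μ (X n))
    (hconv : TendstoInMeasure μ X atTop Y) :
    IsGaussianRV μ Y ∧
      ∀ p : ENNReal, 1 ≤ p → p ≠ ⊤ →
        Tendsto (fun n => eLpNorm (X n - Y) p μ) atTop (nhds 0) := by
  choose m v hX using fun n => (hgauss n).exists_hasLaw
  have hXm : ∀ n, AEMeasurable (X n) μ := fun n => (hX n).aemeasurable
  have hlaws := (hconv.tendstoInDistribution hXm).tendsto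
  obtain ⟨m₀, v₀, hY⟩ := exists_eq_gaussianReal_of_tendsto hlaws fun n => (hX n).map_eq
  refine ⟨⟨m₀, v₀, hY⟩, fun p hp1 hp => ?_⟩
  obtain ⟨C, hC⟩ := exists_bound_of_tendsto_gaussianReal hlaws fun n => (hX n).map_eq
  obtain ⟨N, hN⟩ := hC.exists_forall_of_atTop
  have hui : UnifIntegrable (fun n => X (n + N)) p μ :=
    unifIntegrable_of_hasLaw_gaussianReal (fun n => hX (n + N))
      (fun n => (hN (n + N) le_add_self).1) (fun n => (hN (n + N) le_add_self).2) hp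
  have hYLp : MemLp Y p μ :=
    HasLaw.memLp ⟨hconv.aemeasurable hXm, hY⟩ (memLp_id_gaussianReal' p hp)
  rw [← tendsto_add_atTop_iff_nat N]
  exact tendsto_Lp_finite_of_tendstoInMeasure hp1 hp (fun n => (hXm _).aestronglyMeasurable)
    hYLp hui (hconv.comp (tendsto_add_atTop_nat N))

/-- If a sequence of Gaussian random variables converges in probability to `X`,
then `X` is Gaussian (possibly degenerate) and the convergence holds in `L^p`
for every `1 ≤ p < ∞`. -/
theorem gaussian_tendstoInMeasure_limit_gaussian_and_Lp
    {Ω : Type*} [MeasurableSpace Ω] (μ : Measure Ω) [IsProbabilityMeasure μ]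
    (X : ℕ → Ω → ℝ) (Y : Ω → ℝ)
    (hmeas : ∀ n, Measurable (X n)) (hYmeas : Measurable Y)
    (hgauss : ∀ n, IsGaussianRV μ (X n))
    (hconv : TendstoInMeasure μ X atTop Y) :
    IsGaussianRV μ Y ∧
      ∀ p : ENNReal, 1 ≤ p → p ≠ ⊤ →
        Tendsto (fun n => eLpNorm (X n - Y) p μ) atTop (nhds 0) :=
  gaussian_tendstoInMeasure_limit_gaussian_and_Lp_general μ X Y hgauss hconv
end

section
/- A series of independent real-valued random variables converges almost surely if and only if it converges in probability. -/
/-!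
Almost sure convergence implies convergence in probability for any sequence. Conversely, a
sequence converging in probability is Cauchy in probability, and for partial sums of independent
variables Ottaviani's maximal inequality upgrades this to a bound on the whole tail:
`P(sup_{m ≥ N} |S_m - S_N| > 2ε) ≤ 2 sup_{m ≥ N} P(|S_m - S_N| ≥ ε)` once `N` is so large that
`P(|S_m - S_l| ≥ ε) ≤ 1/2` for all `m, l ≥ N`. Hence the oscillation of `(S_N)` beyond `N` tends
to zero in probability, which forces `(S_N)` to be Cauchy almost surely.
-/

open MeasureTheory ProbabilityTheory Filter Topology Finset
open scoped ENNReal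

theorem MeasurableSet.disjointed_of_le {Ω : Type*} {m : MeasurableSpace Ω} {f : ℕ → Set Ω} {j : ℕ}
    (hf : ∀ i ≤ j, MeasurableSet[m] (f i)) : MeasurableSet[m] (disjointed f j) := by
  rw [disjointed_eq_inter_compl]
  exact (hf j le_rfl).inter <| .iInter fun i => .iInter fun hi => (hf i hi.le).compl

namespace MeasureTheory

variable {Ω ι E : Type*} [MeasurableSpace Ω] {μ : Measure Ω} [PseudoMetricSpace E]

theorem TendstoInMeasure.tendsto_measure_dist_ge {l : Filter ι} {f : ι → Ω → E} {g : Ω → E}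
    (hf : TendstoInMeasure μ f l g) {ε : ℝ} (hε : 0 < ε) :
    Tendsto (fun p : ι × ι => μ {ω | ε ≤ dist (f p.1 ω) (f p.2 ω)}) (l ×ˢ l) (𝓝 0) := by
  have hg := tendstoInMeasure_iff_dist.1 hf (ε / 2) (half_pos hε)
  have hsum := (hg.comp tendsto_fst).add (hg.comp tendsto_snd)
  rw [add_zero] at hsum
  refine tendsto_of_tendsto_of_tendsto_of_le_of_le tendsto_const_nhds hsum (fun _ => zero_le)
    fun p => (measure_mono fun ω hω => ?_).trans (measure_union_le _ _)
  by_contra h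
  simp only [Set.mem_union, Set.mem_ofPred_eq, not_or, not_le] at h hω
  linarith [dist_triangle_right (f p.1 ω) (f p.2 ω) (g ω)]

theorem ae_cauchySeq_of_tendsto_measure_exists_dist_gt {f : ℕ → Ω → E}
    (hf : ∀ ε > 0, Tendsto (fun N => μ {ω | ∃ m ≥ N, ε < dist (f m ω) (f N ω)}) atTop (𝓝 0)) :
    ∀ᵐ ω ∂μ, CauchySeq fun n => f n ω := by
  have hosc (k : ℕ) : ∀ᵐ ω ∂μ, ∃ N, ∀ m ≥ N, dist (f m ω) (f N ω) ≤ 1 / (k + 1) := by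
    refine ae_iff.2 <| nonpos_iff_eq_zero.1 <|
      ge_of_tendsto' (hf (1 / (k + 1)) Nat.one_div_pos_of_nat) fun N => measure_mono fun ω hω => ?_
    push Not at hω
    exact hω N
  filter_upwards [ae_all_iff.2 hosc] with ω hω
  refine Metric.cauchySeq_iff'.2 fun ε hε => ?_
  obtain ⟨k, hk⟩ := exists_nat_one_div_lt hε
  obtain ⟨N, hN⟩ := hω k
  exact ⟨N, fun m hm => (hN m hm).trans_lt hk⟩

theorem one_sub_mul_measure_biUnion_le {s : Finset ι} {A B : ι → Set Ω} {F : Set Ω} {c : ℝ≥0∞}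
    (hdisj : (s : Set ι).PairwiseDisjoint A) (hA : ∀ j ∈ s, MeasurableSet (A j))
    (hB : ∀ j ∈ s, MeasurableSet (B j)) (hmul : ∀ j ∈ s, μ (A j ∩ B j) = μ (A j) * μ (B j))
    (hc : ∀ j ∈ s, 1 - c ≤ μ (B j)) (hF : ∀ j ∈ s, A j ∩ B j ⊆ F) :
    (1 - c) * μ (⋃ j ∈ s, A j) ≤ μ F :=
  calc (1 - c) * μ (⋃ j ∈ s, A j) = ∑ j ∈ s, (1 - c) * μ (A j) := by
        rw [measure_biUnion_finset hdisj hA, mul_sum]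
    _ ≤ ∑ j ∈ s, μ (A j ∩ B j) := sum_le_sum fun j hj => by
        rw [hmul j hj, mul_comm]
        gcongr
        exact hc j hj
    _ = μ (⋃ j ∈ s, A j ∩ B j) :=
        (measure_biUnion_finset (hdisj.mono fun _ => Set.inter_subset_left)
          fun j hj => (hA j hj).inter (hB j hj)).symm
    _ ≤ μ F := measure_mono (Set.iUnion₂_subset hF)

end MeasureTheory

namespace ProbabilityTheory

variable {Ω : Type*} {X : ℕ → Ω → ℝ}

theorem measurable_sum_iSup_comap (s : Set ℕ) {t : Finset ℕ} (ht : ↑t ⊆ s) :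
    Measurable[⨆ k ∈ s, MeasurableSpace.comap (X k) inferInstance] fun ω => ∑ k ∈ t, X k ω :=
  Finset.measurable_sum _ fun k hk =>
    (comap_measurable (X k)).mono (le_biSup (fun k => MeasurableSpace.comap (X k) _) (ht hk)) le_rfl

variable [MeasurableSpace Ω] {μ : Measure Ω} [IsProbabilityMeasure μ]

theorem iIndepFun.ottaviani_ineq (hmeas : ∀ k, Measurable (X k))
    (hindep : iIndepFun X μ) {n : ℕ} {ε δ : ℝ} {c : ℝ≥0∞}
    (hc : ∀ j ≤ n, μ {ω | δ < |∑ k ∈ range n, X k ω - ∑ k ∈ range j, X k ω|} ≤ c) :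
    (1 - c) * μ {ω | ∃ j ≤ n, ε + δ < |∑ k ∈ range j, X k ω|}
      ≤ μ {ω | ε < |∑ k ∈ range n, X k ω|} := by
  set σX : Set ℕ → MeasurableSpace Ω := fun s => ⨆ k ∈ s, MeasurableSpace.comap (X k) inferInstance
  have hσX_le (s : Set ℕ) : σX s ≤ ‹_› := iSup₂_le fun k _ => (hmeas k).comap_le
  -- `A j`: the `j`-th partial sum is the first one to exceed `ε + δ` in absolute value
  set A := disjointed fun j => {ω | ε + δ < |∑ k ∈ range j, X k ω|}
  set B : ℕ → Set Ω := fun j => {ω | |∑ k ∈ Ico j n, X k ω| ≤ δ}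
  have hA (j : ℕ) : MeasurableSet[σX (Set.Iio j)] (A j) :=
    .disjointed_of_le fun i hi => (continuous_abs.measurable.comp
      (measurable_sum_iSup_comap _ fun k hk => by simp at hk ⊢; omega)) measurableSet_Ioi
  have hB (j : ℕ) : MeasurableSet[σX (Set.Ici j)] (B j) :=
    (continuous_abs.measurable.comp
      (measurable_sum_iSup_comap _ fun k hk => by simp at hk ⊢; omega)) measurableSet_Iic
  have hE : {ω | ∃ j ≤ n, ε + δ < |∑ k ∈ range j, X k ω|} = ⋃ j ∈ range (n + 1), A j := by
    rw [biUnion_range_succ_disjointed, partialSups_eq_biSup]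
    ext ω
    simp
  rw [hE]
  refine one_sub_mul_measure_biUnion_le ((disjoint_disjointed _).set_pairwise _)
    (fun j _ => hσX_le _ _ (hA j)) (fun j _ => hσX_le _ _ (hB j)) (fun j _ => ?_)
    (fun j hj => ?_) (fun j hj => ?_)
  · have hind : Indep (σX (Set.Iio j)) (σX (Set.Ici j)) μ :=
      indep_iSup_of_disjoint (fun k => (hmeas k).comap_le) hindep.iIndep
        (Set.Iio_disjoint_Ici le_rfl)
    exact (Indep_iff _ _ μ).1 hind _ _ (hA j) (hB j)
  · have hj : j ≤ n := Nat.le_of_lt_succ (mem_range.1 hj)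
    have hBc : (B j)ᶜ = {ω | δ < |∑ k ∈ range n, X k ω - ∑ k ∈ range j, X k ω|} := by
      ext ω
      simp [B, sum_Ico_eq_sub _ hj]
    calc 1 - c ≤ 1 - μ (B j)ᶜ := tsub_le_tsub_left (hBc ▸ hc j hj) 1
      _ = μ (B j) := by rw [← prob_compl_eq_one_sub (hσX_le _ _ (hB j)).compl, compl_compl]
  · rintro ω ⟨hωA, hωB⟩
    have hωA : ε + δ < |∑ k ∈ range j, X k ω| := disjointed_subset _ j hωA
    have hωB : |∑ k ∈ Ico j n, X k ω| ≤ δ := hωB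
    rw [Set.mem_ofPred_eq, ← sum_range_add_sum_Ico _ (Nat.le_of_lt_succ (mem_range.1 hj))]
    have htri := abs_add_le (∑ k ∈ range j, X k ω + ∑ k ∈ Ico j n, X k ω) (-∑ k ∈ Ico j n, X k ω)
    rw [add_neg_cancel_right, abs_neg] at htri
    linarith

theorem iIndepFun.measure_exists_dist_sum_range_gt_le
    (hmeas : ∀ k, Measurable (X k)) (hindep : iIndepFun X μ) {N : ℕ} {ε : ℝ} {η : ℝ≥0∞}
    (hhalf : ∀ m ≥ N, ∀ l ≥ N,
      μ {ω | ε ≤ dist (∑ k ∈ range m, X k ω) (∑ k ∈ range l, X k ω)} ≤ 2⁻¹)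
    (hη : ∀ m ≥ N, μ {ω | ε ≤ dist (∑ k ∈ range m, X k ω) (∑ k ∈ range N, X k ω)} ≤ η) :
    μ {ω | ∃ m ≥ N, 2 * ε < dist (∑ k ∈ range m, X k ω) (∑ k ∈ range N, X k ω)} ≤ 2 * η := by
  have hshift (j : ℕ) (ω : Ω) :
      ∑ k ∈ range j, X (N + k) ω = ∑ k ∈ range (N + j), X k ω - ∑ k ∈ range N, X k ω :=
    eq_sub_of_add_eq' (sum_range_add _ N j).symm
  have hunion : {ω | ∃ m ≥ N, 2 * ε < dist (∑ k ∈ range m, X k ω) (∑ k ∈ range N, X k ω)}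
      = ⋃ n, {ω | ∃ j ≤ n, ε + ε < |∑ k ∈ range j, X (N + k) ω|} := by
    ext ω
    simp only [Set.mem_iUnion, Set.mem_ofPred_eq, hshift, two_mul, Real.dist_eq]
    constructor
    · rintro ⟨m, hm, hlt⟩
      obtain ⟨j, rfl⟩ := Nat.exists_eq_add_of_le hm
      exact ⟨j, j, le_rfl, hlt⟩
    · rintro ⟨n, j, -, hlt⟩
      exact ⟨N + j, N.le_add_right j, hlt⟩
  have hmono : Monotone fun n => {ω | ∃ j ≤ n, ε + ε < |∑ k ∈ range j, X (N + k) ω|} :=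
    fun n n' hn ω ⟨j, hj, hlt⟩ => ⟨j, hj.trans hn, hlt⟩
  rw [hunion, hmono.measure_iUnion]
  refine iSup_le fun n => ?_
  have hott := (hindep.precomp (add_right_injective N)).ottaviani_ineq
    (fun k => hmeas (N + k)) (n := n) (ε := ε) (δ := ε) (c := 2⁻¹) fun j hj => by
      refine (measure_mono fun ω hω => ?_).trans (hhalf (N + n) (by omega) (N + j) (by omega))
      simp only [Set.mem_ofPred_eq, hshift, sub_sub_sub_cancel_right, Real.dist_eq] at hω ⊢
      exact hω.le
  have htail : μ {ω | ε < |∑ k ∈ range n, X (N + k) ω|} ≤ η := by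
    refine (measure_mono fun ω hω => ?_).trans (hη (N + n) (by omega))
    simp only [Set.mem_ofPred_eq, hshift, Real.dist_eq] at hω ⊢
    exact hω.le
  rw [ENNReal.one_sub_inv_two] at hott
  calc _ = 2 * (2⁻¹ * μ {ω | ∃ j ≤ n, ε + ε < |∑ k ∈ range j, X (N + k) ω|}) := by
        rw [← mul_assoc, ENNReal.mul_inv_cancel two_ne_zero ENNReal.ofNat_ne_top, one_mul]
    _ ≤ 2 * η := by gcongr; exact hott.trans htail

theorem iIndepFun.tendsto_measure_exists_dist_sum_range_gt
    (hmeas : ∀ k, Measurable (X k)) (hindep : iIndepFun X μ)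
    (hcauchy : ∀ ε > 0, Tendsto (fun p : ℕ × ℕ => μ {ω | ε ≤
      dist (∑ k ∈ range p.1, X k ω) (∑ k ∈ range p.2, X k ω)}) (atTop ×ˢ atTop) (𝓝 0))
    {ε : ℝ} (hε : 0 < ε) :
    Tendsto (fun N => μ {ω | ∃ m ≥ N,
      ε < dist (∑ k ∈ range m, X k ω) (∑ k ∈ range N, X k ω)}) atTop (𝓝 0) := by
  refine ENNReal.tendsto_nhds_zero.2 fun η hη => ?_
  have hsmall := ((hcauchy _ (half_pos hε)).eventually (eventually_le_nhds (b := 2⁻¹)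
    (by norm_num))).and ((hcauchy _ (half_pos hε)).eventually
      (eventually_le_nhds (ENNReal.half_pos hη.ne')))
  rw [prod_atTop_atTop_eq] at hsmall
  obtain ⟨N₀, hN₀⟩ := eventually_atTop_prod_self'.1 hsmall
  refine eventually_atTop.2 ⟨N₀, fun N hN => ?_⟩
  have h := hindep.measure_exists_dist_sum_range_gt_le hmeas (N := N)
    (fun m hm l hl => (hN₀ m (hN.trans hm) l (hN.trans hl)).1)
    (fun m hm => (hN₀ m (hN.trans hm) N hN).2)
  rwa [mul_div_cancel₀ _ two_ne_zero, ENNReal.mul_div_cancel two_ne_zero ENNReal.ofNat_ne_top] at h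

end ProbabilityTheory

/-- Lévy's equivalence theorem: a series of independent real random variables
converges almost surely if and only if it converges in probability. -/
theorem levy_series_ae_converges_iff_tendstoInMeasure
    {Ω : Type*} [MeasurableSpace Ω] (μ : Measure Ω) [IsProbabilityMeasure μ]
    (X : ℕ → Ω → ℝ) (hmeas : ∀ n, Measurable (X n))
    (hindep : iIndepFun X μ) :
    (∀ᵐ ω ∂μ, ∃ l : ℝ,
        Tendsto (fun N => ∑ n ∈ Finset.range N, X n ω) atTop (nhds l)) ↔
    (∃ S : Ω → ℝ, Measurable S ∧
        TendstoInMeasure μ (fun N ω => ∑ n ∈ Finset.range N, X n ω) atTop S) := by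
  have hsum_meas (N : ℕ) : Measurable fun ω => ∑ n ∈ range N, X n ω :=
    Finset.measurable_sum _ fun n _ => hmeas n
  constructor
  · intro h
    obtain ⟨S, hS, hlim⟩ :=
      measurable_limit_of_tendsto_metrizable_ae (fun N => (hsum_meas N).aemeasurable) h
    exact ⟨S, hS, tendstoInMeasure_of_tendsto_ae (fun N => (hsum_meas N).aestronglyMeasurable) hlim⟩
  · rintro ⟨S, -, hS⟩
    have hcauchy := ae_cauchySeq_of_tendsto_measure_exists_dist_gt fun ε hε =>
      hindep.tendsto_measure_exists_dist_sum_range_gt hmeas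
        (fun δ hδ => hS.tendsto_measure_dist_ge hδ) hε
    filter_upwards [hcauchy] with ω hω
    exact cauchySeq_tendsto_of_complete hω
end

section
/- Let X_m, Y_m, P_m, Q_m (m ≥ 1) be i.i.d. centered Gaussians with variance σ² > 0, and let ħ > 0. Then E[exp((i/ħ) Σ_{m≥1} (1/(2πm))(X_m Q_m − Y_m P_m))] = (σ²/(2ħ)) / sinh(σ²/(2ħ)). -/
/-!
For independent `N(0, v)` variables, `E[exp(i u X Q)] = (1 + u²v²)^(-1/2)`: integrating out `Q`
leaves the Gaussian integral `E[exp(-u²v X²/2)]`. Hence each mode `X Q - Y P` has characteristic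
function `1 / (1 + t²v²)`, and since the modes are independent, the partial sums of the action have
characteristic function `∏ₘ (1 + (σ²/(2πmħ))²)⁻¹` at `1/ħ`. Euler's sine product at an imaginary
argument gives the limit `x / sinh x` with `x = σ²/(2ħ)`, and dominated convergence passes to the
almost sure limit `T`.
-/
open MeasureTheory ProbabilityTheory Filter Real
open scoped NNReal Topology

namespace ProbabilityTheory

variable {Ω ι κ 𝓧 : Type*} {mΩ : MeasurableSpace Ω} {m𝓧 : MeasurableSpace 𝓧} {P : Measure Ω}

lemma iIndepFun.curry [IsProbabilityMeasure P] {X : ι → κ → Ω → 𝓧}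
    (mX : ∀ i j, Measurable (X i j)) (h : iIndepFun (fun p : ι × κ ↦ X p.1 p.2) P) :
    iIndepFun (fun i ω j ↦ X i j ω) P := by
  rw [iIndepFun_iff_map_fun_eq_infinitePi_map (fun i ↦ by fun_prop)]
  have hrow (i : ι) : P.map (fun ω j ↦ X i j ω) = Measure.infinitePi fun j ↦ P.map (X i j) :=
    (h.precomp (Prod.mk_right_injective i)).map_fun_eq_infinitePi_map (mX i)
  have hsigma : P.map (fun ω (p : (_ : ι) × κ) ↦ X p.1 p.2 ω) =
      Measure.infinitePi fun p : (_ : ι) × κ ↦ P.map (X p.1 p.2) :=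
    (h.precomp (Equiv.sigmaEquivProd ι κ).injective).map_fun_eq_infinitePi_map
      fun p ↦ mX p.1 p.2
  have (i : ι) (j : κ) := Measure.isProbabilityMeasure_map (μ := P) (mX i j).aemeasurable
  simp_rw [hrow]
  rw [← Measure.infinitePi_map_piCurry, ← hsigma, Measure.map_map (by fun_prop) (by fun_prop)]
  rfl

lemma charFun_map_apply_real {X : Ω → ℝ} (hX : AEMeasurable X P) (t : ℝ) :
    charFun (P.map X) t = ∫ ω, Complex.exp (t * X ω * Complex.I) ∂P := by
  rw [charFun_apply_real, integral_map hX (by fun_prop)]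

lemma integral_exp_neg_mul_sq_gaussianReal {v : ℝ≥0} {c : ℝ} (hc : 0 < 1 + 2 * c * v) :
    ∫ x, rexp (-c * x ^ 2) ∂gaussianReal 0 v = (√(1 + 2 * c * v))⁻¹ := by
  rcases eq_or_ne v 0 with rfl | hv
  · simp [gaussianReal_zero_var]
  have hv' : (v : ℝ) ≠ 0 := by exact_mod_cast hv
  have hdensity (x : ℝ) : gaussianPDFReal 0 v x • rexp (-c * x ^ 2) =
      (√(2 * π * v))⁻¹ * rexp (-(c + (2 * (v : ℝ))⁻¹) * x ^ 2) := by
    rw [gaussianPDFReal, smul_eq_mul, mul_assoc, ← Real.exp_add]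
    congr 2
    field_simp
    ring
  rw [integral_gaussianReal_eq_integral_smul hv]
  simp_rw [hdensity]
  rw [integral_const_mul, integral_gaussian, ← Real.sqrt_inv,
    ← Real.sqrt_mul (by positivity), ← Real.sqrt_inv]
  congr 1
  field_simp
  ring

lemma charFun_gaussianReal_prod_map_mul (v : ℝ≥0) (u : ℝ) :
    charFun (((gaussianReal 0 v).prod (gaussianReal 0 v)).map fun p ↦ p.1 * p.2) u =
      ((√(1 + u ^ 2 * v ^ 2))⁻¹ : ℝ) := by
  have hinner (x : ℝ) : ∫ y, Complex.exp (u * (x * y) * Complex.I) ∂gaussianReal 0 v =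
      (rexp (-(u ^ 2 * v / 2) * x ^ 2) : ℝ) := by
    have := charFun_gaussianReal (μ := 0) (v := v) (u * x)
    rw [charFun_apply_real] at this
    simp_rw [← mul_assoc]
    push_cast at this ⊢
    rw [this]
    congr 1
    ring
  rw [charFun_apply_real, integral_map (by fun_prop) (by fun_prop),
    integral_prod _ ((integrable_const (1 : ℝ)).mono' (by fun_prop) (ae_of_all _ fun p ↦ ?_))]
  · simp only [Complex.ofReal_mul, hinner]
    rw [integral_complex_ofReal,
      integral_exp_neg_mul_sq_gaussianReal (by positivity : 0 < 1 + 2 * (u ^ 2 * v / 2) * v)]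
    congr 4
    ring
  · rw [← Complex.ofReal_mul, Complex.norm_exp_ofReal_mul_I]

section Gaussian

variable [IsFiniteMeasure P] {v : ℝ≥0}

lemma IndepFun.charFun_map_mul_of_gaussianReal {a b : Ω → ℝ} (ha : Measurable a)
    (hb : Measurable b) (hab : IndepFun a b P) (hla : P.map a = gaussianReal 0 v)
    (hlb : P.map b = gaussianReal 0 v) (u : ℝ) :
    charFun (P.map (a * b)) u = ((√(1 + u ^ 2 * v ^ 2))⁻¹ : ℝ) := by
  have hjoint : P.map (fun ω ↦ (a ω, b ω)) = (gaussianReal 0 v).prod (gaussianReal 0 v) := by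
    rw [(indepFun_iff_map_prod_eq_prod_map_map ha.aemeasurable hb.aemeasurable).1 hab, hla, hlb]
  rw [← charFun_gaussianReal_prod_map_mul, ← hjoint, Measure.map_map (by fun_prop) (by fun_prop)]
  rfl

lemma iIndepFun.charFun_map_mul_sub_mul_of_gaussianReal {g : Fin 4 → Ω → ℝ}
    (hg : ∀ j, Measurable (g j)) (hind : iIndepFun g P)
    (hlaw : ∀ j, P.map (g j) = gaussianReal 0 v) (t : ℝ) :
    charFun (P.map fun ω ↦ g 0 ω * g 3 ω - g 1 ω * g 2 ω) t = ((1 + t ^ 2 * v ^ 2)⁻¹ : ℝ) := by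
  have hsplit : IndepFun (g 0 * g 3) (fun ω ↦ -1 * (g 1 * g 2) ω) P :=
    (hind.indepFun_mul_mul hg 0 3 1 2 (by decide) (by decide) (by decide) (by decide)).comp
      measurable_id (measurable_const_mul _)
  have hsum : (fun ω ↦ g 0 ω * g 3 ω - g 1 ω * g 2 ω) = g 0 * g 3 + fun ω ↦ -1 * (g 1 * g 2) ω := by
    ext ω
    simp only [Pi.add_apply, Pi.mul_apply]
    ring
  rw [hsum, hsplit.charFun_map_add_eq_mul (by fun_prop) (by fun_prop), Pi.mul_apply,
    charFun_map_mul_comp (by fun_prop),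
    (hind.indepFun (by decide : (0 : Fin 4) ≠ 3)).charFun_map_mul_of_gaussianReal (hg 0) (hg 3)
      (hlaw 0) (hlaw 3),
    (hind.indepFun (by decide : (1 : Fin 4) ≠ 2)).charFun_map_mul_of_gaussianReal (hg 1) (hg 2)
      (hlaw 1) (hlaw 2), ← Complex.ofReal_mul, ← mul_inv, neg_one_mul, neg_sq,
    Real.mul_self_sqrt (by positivity)]

end Gaussian

section TopologicalAction

/-- `f (m, 0), f (m, 1), f (m, 2), f (m, 3)` stand for `X_m, Y_m, P_m, Q_m`; the term with index
`m` is the paper's mode `m + 1`. -/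
noncomputable def topologicalActionTerm (f : ℕ × Fin 4 → Ω → ℝ) (m : ℕ) (ω : Ω) : ℝ :=
  1 / (2 * π * (m + 1)) * (f (m + 1, 0) ω * f (m + 1, 3) ω - f (m + 1, 1) ω * f (m + 1, 2) ω)

variable [IsProbabilityMeasure P] {v : ℝ≥0} {f : ℕ × Fin 4 → Ω → ℝ}

lemma measurable_topologicalActionTerm (hf : ∀ i, Measurable (f i)) (m : ℕ) :
    Measurable (topologicalActionTerm f m) := by
  unfold topologicalActionTerm
  have := hf (m + 1, 0); have := hf (m + 1, 1); have := hf (m + 1, 2); have := hf (m + 1, 3)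
  fun_prop

lemma iIndepFun_topologicalActionTerm (hf : ∀ i, Measurable (f i)) (hind : iIndepFun f P) :
    iIndepFun (topologicalActionTerm f) P :=
  ((hind.curry fun m j ↦ hf (m, j)).precomp Nat.succ_injective).comp
    (fun m (y : Fin 4 → ℝ) ↦ 1 / (2 * π * (m + 1)) * (y 0 * y 3 - y 1 * y 2))
    fun m ↦ by fun_prop

lemma iIndepFun.charFun_map_topologicalActionTerm (hf : ∀ i, Measurable (f i))
    (hind : iIndepFun f P) (hlaw : ∀ i, P.map (f i) = gaussianReal 0 v) (m : ℕ) (t : ℝ) :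
    charFun (P.map (topologicalActionTerm f m)) t =
      ((1 + (t * v / 2) ^ 2 / (π ^ 2 * (m + 1) ^ 2))⁻¹ : ℝ) := by
  have hmode := (hind.precomp (Prod.mk_right_injective (m + 1))).charFun_map_mul_sub_mul_of_gaussianReal
    (fun _ ↦ hf _) (fun _ ↦ hlaw _) (1 / (2 * π * (m + 1)) * t)
  unfold topologicalActionTerm
  rw [charFun_map_mul_comp (by fun_prop), hmode]
  congr 2
  field_simp

lemma iIndepFun.charFun_map_sum_topologicalActionTerm (hf : ∀ i, Measurable (f i))
    (hind : iIndepFun f P) (hlaw : ∀ i, P.map (f i) = gaussianReal 0 v) (N : ℕ) (t : ℝ) :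
    charFun (P.map fun ω ↦ ∑ m ∈ Finset.range N, topologicalActionTerm f m ω) t =
      ((∏ m ∈ Finset.range N, (1 + (t * v / 2) ^ 2 / (π ^ 2 * (m + 1) ^ 2))⁻¹ : ℝ) : ℂ) := by
  rw [iIndepFun.charFun_map_fun_finsetSum_eq_prod
      (fun m _ ↦ (measurable_topologicalActionTerm hf m).aemeasurable)
      ((iIndepFun_topologicalActionTerm hf hind).restrict _),
    Finset.prod_apply, Complex.ofReal_prod]
  exact Finset.prod_congr rfl fun m _ ↦ hind.charFun_map_topologicalActionTerm hf hlaw m t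

end TopologicalAction

end ProbabilityTheory

lemma Real.tendsto_euler_sinh_prod (x : ℝ) :
    Tendsto (fun n : ℕ ↦ x * ∏ j ∈ Finset.range n, (1 + x ^ 2 / (π ^ 2 * (j + 1) ^ 2)))
      atTop (𝓝 (sinh x)) := by
  have h := (Complex.continuous_im.tendsto _).comp
    (Complex.tendsto_euler_sin_prod (x * Complex.I / π))
  have hπ : (π : ℂ) ≠ 0 := Complex.ofReal_ne_zero.2 Real.pi_ne_zero
  have harg : (π : ℂ) * (x * Complex.I / π) = x * Complex.I := by field_simp
  rw [harg, Complex.sin_mul_I, ← Complex.ofReal_sinh, Complex.mul_I_im, Complex.ofReal_re] at h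
  refine h.congr fun n ↦ ?_
  have hfactor (j : ℕ) : (1 : ℂ) - (x * Complex.I / π) ^ 2 / ((j : ℂ) + 1) ^ 2 =
      ((1 + x ^ 2 / (π ^ 2 * (j + 1) ^ 2) : ℝ) : ℂ) := by
    push_cast
    field_simp
    rw [Complex.I_sq]
    ring
  simp only [Function.comp_apply, hfactor, ← Complex.ofReal_prod]
  rw [mul_right_comm, ← Complex.ofReal_mul, Complex.mul_I_im, Complex.ofReal_re]

lemma Real.tendsto_prod_inv_one_add_sq_div {x : ℝ} (hx : x ≠ 0) :
    Tendsto (fun n : ℕ ↦ ∏ j ∈ Finset.range n, (1 + x ^ 2 / (π ^ 2 * (j + 1) ^ 2))⁻¹)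
      atTop (𝓝 (x / sinh x)) := by
  have h := ((tendsto_euler_sinh_prod x).const_mul x⁻¹).inv₀
    (by simp [hx, Real.sinh_ne_zero.2 hx])
  rw [mul_inv, inv_inv, ← div_eq_mul_inv] at h
  refine h.congr fun n ↦ ?_
  rw [inv_mul_cancel_left₀ hx, Finset.prod_inv_distrib]

lemma tendsto_integral_comp_of_ae_tendsto {Ω X ι : Type*} {mΩ : MeasurableSpace Ω}
    {μ : Measure Ω} [IsFiniteMeasure μ] [TopologicalSpace X] [MeasurableSpace X]
    [OpensMeasurableSpace X] {l : Filter ι} [l.IsCountablyGenerated]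
    {g : X → ℂ} (hg : Continuous g) {C : ℝ} (hC : ∀ x, ‖g x‖ ≤ C)
    {S : ι → Ω → X} {T : Ω → X} (hS : ∀ n, AEMeasurable (S n) μ)
    (hST : ∀ᵐ ω ∂μ, Tendsto (S · ω) l (𝓝 (T ω))) :
    Tendsto (fun n ↦ ∫ ω, g (S n ω) ∂μ) l (𝓝 (∫ ω, g (T ω) ∂μ)) :=
  tendsto_integral_filter_of_dominated_convergence (fun _ ↦ C)
    (.of_forall fun n ↦ (hg.measurable.comp_aemeasurable (hS n)).aestronglyMeasurable)
    (.of_forall fun _ ↦ .of_forall fun _ ↦ hC _) (integrable_const C)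
    (hST.mono fun _ hω ↦ (hg.tendsto _).comp hω)

theorem integral_exp_topologicalAction_general
    {Ω : Type*} [MeasurableSpace Ω] (μ : Measure Ω) [IsProbabilityMeasure μ]
    (σ : NNReal) (hσ : 0 < σ) (ℏ : ℝ) (hℏ : 0 < ℏ)
    (X Y P Q : ℕ → Ω → ℝ)
    (hmeas : ∀ i : ℕ × Fin 4, Measurable (![X, Y, P, Q] i.2 i.1))
    (hindep : iIndepFun
      (fun i : ℕ × Fin 4 => ![X, Y, P, Q] i.2 i.1) μ)
    (hgauss : ∀ i : ℕ × Fin 4,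
      Measure.map (![X, Y, P, Q] i.2 i.1) μ = gaussianReal 0 (σ ^ 2))
    (T : Ω → ℝ)
    (hT : ∀ᵐ ω ∂μ, Tendsto (fun N => ∑ m ∈ Finset.range N,
        (1 / (2 * π * (m + 1))) *
          (X (m + 1) ω * Q (m + 1) ω - Y (m + 1) ω * P (m + 1) ω))
      atTop (nhds (T ω))) :
    ∫ ω, Complex.exp (Complex.I / ℏ * (T ω)) ∂μ
      = ((σ:ℝ) ^ 2 / (2 * ℏ)) / Real.sinh ((σ:ℝ) ^ 2 / (2 * ℏ)) := by
  have hI (s : ℝ) : Complex.I / ℏ * s = (ℏ⁻¹ : ℝ) * s * Complex.I := by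
    push_cast
    ring
  have hS (N : ℕ) : Measurable fun ω ↦ ∑ m ∈ Finset.range N, topologicalActionTerm
      (fun i : ℕ × Fin 4 ↦ ![X, Y, P, Q] i.2 i.1) m ω :=
    Finset.measurable_sum _ fun m _ ↦ measurable_topologicalActionTerm hmeas m
  have hpartial (N : ℕ) := hindep.charFun_map_sum_topologicalActionTerm hmeas hgauss N ℏ⁻¹
  simp_rw [charFun_map_apply_real (hS _).aemeasurable, ← hI] at hpartial
  have hlim := tendsto_integral_comp_of_ae_tendsto
    (g := fun s : ℝ ↦ Complex.exp (Complex.I / ℏ * s)) (by fun_prop) (C := 1)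
    (fun s ↦ by rw [hI, ← Complex.ofReal_mul, Complex.norm_exp_ofReal_mul_I])
    (fun N ↦ (hS N).aemeasurable) hT
  have hscale : ℏ⁻¹ * ((σ ^ 2 : ℝ≥0) : ℝ) / 2 = (σ : ℝ) ^ 2 / (2 * ℏ) := by
    push_cast
    ring
  have hprod := (Complex.continuous_ofReal.tendsto _).comp
    (Real.tendsto_prod_inv_one_add_sq_div (x := ℏ⁻¹ * (σ ^ 2 : ℝ≥0) / 2)
      (by rw [hscale]; have : (0 : ℝ) < σ := hσ; positivity))
  rw [tendsto_nhds_unique hlim (hprod.congr fun N ↦ (hpartial N).symm), hscale]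
  norm_cast

/-- For jointly i.i.d. centered Gaussians `X_m, Y_m, P_m, Q_m` of variance `σ² > 0`
and `ħ > 0`, the expectation of `exp((i/ħ) Σ_{m≥1} (1/(2πm))(X_m Q_m − Y_m P_m))`
equals `(σ²/(2ħ)) / sinh(σ²/(2ħ))`. -/
theorem integral_exp_topologicalAction
    {Ω : Type*} [MeasurableSpace Ω] (μ : Measure Ω) [IsProbabilityMeasure μ]
    (σ : NNReal) (hσ : 0 < σ) (ℏ : ℝ) (hℏ : 0 < ℏ)
    (X Y P Q : ℕ → Ω → ℝ)
    (hmeas : ∀ i : ℕ × Fin 4, Measurable (![X, Y, P, Q] i.2 i.1))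
    (hindep : iIndepFun
      (fun i : ℕ × Fin 4 => ![X, Y, P, Q] i.2 i.1) μ)
    (hgauss : ∀ i : ℕ × Fin 4,
      Measure.map (![X, Y, P, Q] i.2 i.1) μ = gaussianReal 0 (σ ^ 2))
    (T : Ω → ℝ) (hTmeas : Measurable T)
    (hT : ∀ᵐ ω ∂μ, Tendsto (fun N => ∑ m ∈ Finset.range N,
        (1 / (2 * π * (m + 1))) *
          (X (m + 1) ω * Q (m + 1) ω - Y (m + 1) ω * P (m + 1) ω))
      atTop (nhds (T ω))) :
    ∫ ω, Complex.exp (Complex.I / ℏ * (T ω)) ∂μ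
      = ((σ:ℝ) ^ 2 / (2 * ℏ)) / Real.sinh ((σ:ℝ) ^ 2 / (2 * ℏ)) :=
  integral_exp_topologicalAction_general μ σ hσ ℏ hℏ X Y P Q hmeas hindep hgauss T hT
end
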